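/- Assume the weight matrix ω is symmetric. Then the autonomous Hopfield network has no nonconstant periodic solutions: if x : ℝ → ℝ^N is a solution and there exists T > 0 with x(t + T) = x(t) for all t ∈ ℝ, then x is constant (and its value is an equilibrium). -/

import Mathlib

/-!
Symmetric weights make the network gradient-like. With `G' s = s F' s`, the Hopfield energy
`E x = -(g/2) ∑ᵢⱼ F(ωᵢⱼ) F(xᵢ) F(xⱼ) + ∑ᵢ G(xᵢ)` has derivative `-∑ᵢ F'(xᵢ) uᵢ(x)²` along
solutions. Along a periodic solution `E` is periodic and nonincreasing, hence constant, so every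
`uᵢ` vanishes because `F' > 0`, and the solution is constant.
-/

open Real

noncomputable def F (lam s : ℝ) : ℝ := (2 / Real.pi) * Real.arctan (lam * Real.pi * s / 2)

noncomputable def u (N : ℕ) (lam g : ℝ) (ω : Fin N → Fin N → ℝ) (x : Fin N → ℝ) (i : Fin N) : ℝ :=
  -x i + g * ∑ j, F lam (ω i j) * F lam (x j)

open Finset Function

section Energy

variable {ι : Type*} [Fintype ι]

lemma sum_sum_mul_add_mul_swap_of_symm {W : ι → ι → ℝ} (hW : ∀ i j, W i j = W j i)
    (a b : ι → ℝ) :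
    ∑ i, ∑ j, W i j * (a i * b j + b i * a j) = 2 * ∑ i, a i * ∑ j, W i j * b j := by
  have hswap : ∑ i, ∑ j, W i j * (b i * a j) = ∑ i, ∑ j, W i j * (a i * b j) := by
    rw [sum_comm]
    exact sum_congr rfl fun i _ => sum_congr rfl fun j _ => by rw [hW j i]; ring
  calc ∑ i, ∑ j, W i j * (a i * b j + b i * a j)
      = ∑ i, ∑ j, W i j * (a i * b j) + ∑ i, ∑ j, W i j * (b i * a j) := by
        simp only [mul_add, sum_add_distrib]
    _ = 2 * ∑ i, a i * ∑ j, W i j * b j := by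
        rw [hswap, ← two_mul]
        exact congrArg _ (sum_congr rfl fun i _ => by
          rw [mul_sum]; exact sum_congr rfl fun j _ => by ring)

noncomputable def hopfieldEnergy (g : ℝ) (W : ι → ι → ℝ) (φ Φ : ℝ → ℝ) (y : ι → ℝ) : ℝ :=
  -(g / 2) * ∑ i, ∑ j, W i j * (φ (y i) * φ (y j)) + ∑ i, Φ (y i)

theorem hasDerivAt_hopfieldEnergy {g : ℝ} {W : ι → ι → ℝ} (hW : ∀ i j, W i j = W j i)
    {φ φ' Φ : ℝ → ℝ} (hφ : ∀ s, HasDerivAt φ (φ' s) s) (hΦ : ∀ s, HasDerivAt Φ (s * φ' s) s)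
    {x : ℝ → ι → ℝ}
    (hx : ∀ t i, HasDerivAt (fun s => x s i) (-x t i + g * ∑ j, W i j * φ (x t j)) t) (t : ℝ) :
    HasDerivAt (fun t => hopfieldEnergy g W φ Φ (x t))
      (-∑ i, φ' (x t i) * (-x t i + g * ∑ j, W i j * φ (x t j)) ^ 2) t := by
  set v := fun i => -x t i + g * ∑ j, W i j * φ (x t j) with hv
  have hφx : ∀ i, HasDerivAt (fun s => φ (x s i)) (φ' (x t i) * v i) t := fun i =>
    (hφ (x t i)).comp t (hx t i)
  have hΦx : ∀ i, HasDerivAt (fun s => Φ (x s i)) (x t i * φ' (x t i) * v i) t := fun i =>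
    (hΦ (x t i)).comp t (hx t i)
  have hE := ((HasDerivAt.fun_sum (u := univ) fun i _ => HasDerivAt.fun_sum (u := univ) fun j _ =>
    ((hφx i).mul (hφx j)).const_mul (W i j)).const_mul (-(g / 2))).add
    (HasDerivAt.fun_sum (u := univ) fun i _ => hΦx i)
  refine hE.congr_deriv ?_
  rw [sum_sum_mul_add_mul_swap_of_symm hW (fun i => φ' (x t i) * v i) (fun j => φ (x t j)),
    mul_sum, mul_sum, ← sum_add_distrib, ← sum_neg_distrib]
  exact sum_congr rfl fun i _ => by rw [hv]; ring

end Energy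

theorem Function.Periodic.eq_of_antitone {α : Type*} [PartialOrder α] {f : ℝ → α} {T : ℝ}
    (hf : Periodic f T) (hT : 0 < T) (hanti : Antitone f) (a b : ℝ) : f a = f b := by
  wlog hab : a ≤ b generalizing a b
  · exact (this b a (le_of_not_ge hab)).symm
  obtain ⟨n, hn⟩ := exists_nat_ge ((b - a) / T)
  have hbn : b ≤ a + n * T := by linarith [(div_le_iff₀ hT).mp hn]
  exact le_antisymm (hf.nat_mul n a ▸ hanti hbn) (hanti hab)

theorem Function.Periodic.eq_zero_of_hasDerivAt_nonpos {f f' : ℝ → ℝ} {T : ℝ}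
    (hf : Periodic f T) (hT : 0 < T) (hderiv : ∀ t, HasDerivAt f (f' t) t) (hf' : f' ≤ 0)
    (t : ℝ) : f' t = 0 := by
  have hconst : f = fun _ => f 0 :=
    funext fun s => hf.eq_of_antitone hT (antitone_of_hasDerivAt_nonpos hderiv hf') s 0
  exact (hderiv t).unique (hconst ▸ hasDerivAt_const t (f 0))

theorem hasDerivAt_F (lam s : ℝ) :
    HasDerivAt (F lam) (lam / (1 + (lam * π * s / 2) ^ 2)) s := by
  have h := ((((hasDerivAt_id s).const_mul (lam * π)).div_const 2).arctan).const_mul (2 / π)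
  refine h.congr_deriv ?_
  simp only [id]
  field_simp

noncomputable def G (lam s : ℝ) : ℝ := 2 / (lam * π ^ 2) * log (1 + (lam * π * s / 2) ^ 2)

theorem hasDerivAt_G {lam : ℝ} (hlam : lam ≠ 0) (s : ℝ) :
    HasDerivAt (G lam) (s * (lam / (1 + (lam * π * s / 2) ^ 2))) s := by
  have h := (((((hasDerivAt_id s).const_mul (lam * π)).div_const 2).fun_pow 2).const_add 1).log
    (by positivity) |>.const_mul (2 / (lam * π ^ 2))
  refine h.congr_deriv ?_
  simp only [id]
  field_simp
  ring

theorem hopfield_no_periodic_orbits_general (N : ℕ) (lam g : ℝ)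
    (hlam : 0 < lam) (ω : Fin N → Fin N → ℝ)
    (hsym : ∀ i j, ω i j = ω j i)
    (x : ℝ → Fin N → ℝ)
    (hsol : ∀ (t : ℝ) (i : Fin N), HasDerivAt (fun s => x s i) (u N lam g ω (x t) i) t)
    (T : ℝ) (hT : 0 < T) (hper : ∀ t : ℝ, x (t + T) = x t) :
    (∀ t s : ℝ, x t = x s) ∧ (∀ i, u N lam g ω (x 0) i = 0) := by
  set F' := fun s => lam / (1 + (lam * π * s / 2) ^ 2)
  have hF'_pos : ∀ s, 0 < F' s := fun s => by positivity
  have hE_per :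
      Periodic (fun t => hopfieldEnergy g (fun i j => F lam (ω i j)) (F lam) (G lam) (x t)) T :=
    fun t => congrArg _ (hper t)
  have hdiss : ∀ t, -∑ i, F' (x t i) * u N lam g ω (x t) i ^ 2 = 0 :=
    hE_per.eq_zero_of_hasDerivAt_nonpos hT
      (hasDerivAt_hopfieldEnergy (fun i j => by rw [hsym]) (hasDerivAt_F lam)
        (hasDerivAt_G hlam.ne') hsol)
      fun t => neg_nonpos.2 (sum_nonneg fun i _ => by positivity)
  have hu : ∀ t i, u N lam g ω (x t) i = 0 := fun t i => by
    have h := (sum_eq_zero_iff_of_nonneg fun j _ => by positivity).1 (neg_eq_zero.1 (hdiss t)) i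
      (mem_univ i)
    exact (pow_eq_zero_iff two_ne_zero).1 ((mul_eq_zero.1 h).resolve_left (hF'_pos _).ne')
  have hx' : ∀ t, HasDerivAt x 0 t := fun t => hasDerivAt_pi.2 fun i => by
    rw [Pi.zero_apply, ← hu t i]; exact hsol t i
  exact ⟨is_const_of_deriv_eq_zero (fun t => (hx' t).differentiableAt) (fun t => (hx' t).deriv),
    hu 0⟩

/-- For symmetric ω, the autonomous Hopfield network has no nonconstant
periodic solutions: a T-periodic solution is constant and its value is an equilibrium. -/
theorem hopfield_no_periodic_orbits (N : ℕ) (hN : 1 ≤ N) (lam g : ℝ)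
    (hlam : 0 < lam) (hg : 0 < g) (ω : Fin N → Fin N → ℝ)
    (hsym : ∀ i j, ω i j = ω j i)
    (x : ℝ → Fin N → ℝ)
    (hsol : ∀ (t : ℝ) (i : Fin N), HasDerivAt (fun s => x s i) (u N lam g ω (x t) i) t)
    (T : ℝ) (hT : 0 < T) (hper : ∀ t : ℝ, x (t + T) = x t) :
    (∀ t s : ℝ, x t = x s) ∧ (∀ i, u N lam g ω (x 0) i = 0) :=
  hopfield_no_periodic_orbits_general N lam g hlam ω hsym x hsol T hT hper
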